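/- Let A ∈ ℝ^{m×n}. Over all matrices S ∈ ℝ^{k×m} with orthonormal rows (S Sᵀ = I_k, k ≤ m), the maximum of ‖S A‖_F² equals the sum of the top k squared singular values of A: max_{S Sᵀ = I_k} ‖S A‖_F² = ∑_{i=1}^k σ_i(A)², achieved by taking the rows of S to be the top k left singular vectors of A. -/

import Mathlib

open Matrix BigOperators Finset

/-- Squared Frobenius norm of a real matrix. -/
noncomputable def frobSq {m n : ℕ} (A : Matrix (Fin m) (Fin n) ℝ) : ℝ :=
  ∑ i, ∑ j, (A i j) ^ 2

/-- Restores a lemma removed from Mathlib. -/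
theorem Matrix.isHermitian_transpose_mul_self {m n : Type*} [Fintype m] {α : Type*}
    [CommSemiring α] [StarRing α] [TrivialStar α] (A : Matrix m n α) :
    (Aᵀ * A).IsHermitian := by
  simp [Matrix.IsHermitian, Matrix.conjTranspose_mul, Matrix.conjTranspose_eq_transpose_of_trivial]

/-- Squares of the singular values of `A`, in decreasing order, indexed by `ℕ`
(equal to `0` beyond the number of columns): the eigenvalues of `Aᵀ * A` sorted
decreasingly. -/
noncomputable def sValSq {m n : ℕ} (A : Matrix (Fin m) (Fin n) ℝ) : ℕ → ℝ :=
  fun i =>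
    if h : i < n then
      (Matrix.isHermitian_transpose_mul_self A).eigenvalues
        ((Tuple.sort (fun j => -(Matrix.isHermitian_transpose_mul_self A).eigenvalues j)) ⟨i, h⟩)
    else 0

/-- The `i`-th largest singular value (0-indexed) of a real matrix. -/
noncomputable def sVal {m n : ℕ} (A : Matrix (Fin m) (Fin n) ℝ) : ℕ → ℝ :=
  fun i => Real.sqrt (sValSq A i)

section Aux

lemma abstract_ineq (n k : ℕ) (D C : ℕ → ℝ)
    (hD : ∀ i j : ℕ, i ≤ j → D j ≤ D i) (hD0 : ∀ i, 0 ≤ D i)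
    (hDz : ∀ i, n ≤ i → D i = 0)
    (hC0 : ∀ i, 0 ≤ C i) (hC1 : ∀ i, C i ≤ 1)
    (hCk : ∑ i ∈ range n, C i ≤ (k : ℝ)) :
    ∑ i ∈ range n, D i * C i ≤ ∑ i ∈ range k, D i := by
  set t := D k with ht
  have ht0 : 0 ≤ t := hD0 k
  have step : ∀ i ∈ range n, D i * C i ≤ t * C i + (if i ∈ range k then D i - t else 0) := by
    intro i _
    by_cases hik : i ∈ range k
    · simp only [hik, if_true]
      have h1 : t ≤ D i := hD i k (le_of_lt (mem_range.mp hik))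
      nlinarith [hC1 i, hC0 i]
    · simp only [hik, if_false]
      have h1 : D i ≤ t := hD k i (le_of_not_gt (fun h => hik (mem_range.mpr h)))
      nlinarith [hC0 i]
  have hfil : (range n).filter (fun i => i ∈ range k) = range (min n k) := by
    ext i; simp [Nat.lt_min]
  have h2 : ∑ i ∈ range n, D i * C i
      ≤ t * (∑ i ∈ range n, C i) + ∑ i ∈ range (min n k), (D i - t) := by
    calc ∑ i ∈ range n, D i * C i
        ≤ ∑ i ∈ range n, (t * C i + if i ∈ range k then D i - t else 0) :=
          Finset.sum_le_sum step
      _ = t * (∑ i ∈ range n, C i) + ∑ i ∈ range n, (if i ∈ range k then D i - t else 0) := by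
          rw [Finset.sum_add_distrib, Finset.mul_sum]
      _ = t * (∑ i ∈ range n, C i) + ∑ i ∈ range (min n k), (D i - t) := by
          rw [← hfil, Finset.sum_filter]
  rcases le_total n k with hnk | hkn
  · have htz : t = 0 := hDz k hnk
    have hsub : ∑ i ∈ range n, D i ≤ ∑ i ∈ range k, D i :=
      Finset.sum_le_sum_of_subset_of_nonneg (Finset.range_subset_range.mpr hnk) (fun i _ _ => hD0 i)
    rw [min_eq_left hnk, htz] at h2
    simp only [zero_mul, zero_add, sub_zero] at h2
    linarith
  · have hmin : min n k = k := min_eq_right hkn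
    rw [hmin] at h2
    have h3 : ∑ i ∈ range k, (D i - t) = (∑ i ∈ range k, D i) - k * t := by
      rw [Finset.sum_sub_distrib, Finset.sum_const, Finset.card_range, nsmul_eq_mul]
    have hC : t * (∑ i ∈ range n, C i) ≤ t * k := mul_le_mul_of_nonneg_left hCk ht0
    linarith

variable {m n : ℕ}

noncomputable def μA (A : Matrix (Fin m) (Fin n) ℝ) : Fin n → ℝ :=
  (Matrix.isHermitian_transpose_mul_self A).eigenvalues

noncomputable def σA (A : Matrix (Fin m) (Fin n) ℝ) : Equiv.Perm (Fin n) :=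
  Tuple.sort (fun j => -(Matrix.isHermitian_transpose_mul_self A).eigenvalues j)

noncomputable def VA (A : Matrix (Fin m) (Fin n) ℝ) :
    OrthonormalBasis (Fin n) ℝ (EuclideanSpace ℝ (Fin n)) :=
  (Matrix.isHermitian_transpose_mul_self A).eigenvectorBasis

noncomputable def Vf (A : Matrix (Fin m) (Fin n) ℝ) (j : Fin n) : Fin n → ℝ :=
  VA A j

noncomputable def uA (A : Matrix (Fin m) (Fin n) ℝ) (j : Fin n) : Fin m → ℝ :=
  A *ᵥ (Vf A j)

lemma μA_nonneg (A : Matrix (Fin m) (Fin n) ℝ) (j : Fin n) : 0 ≤ μA A j :=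
  Matrix.eigenvalues_conjTranspose_mul_self_nonneg A j

lemma μA_sort_anti (A : Matrix (Fin m) (Fin n) ℝ) :
    ∀ i j : Fin n, i ≤ j → μA A (σA A j) ≤ μA A (σA A i) := by
  intro i j hij
  have h := Tuple.monotone_sort
    (fun j => -(Matrix.isHermitian_transpose_mul_self A).eigenvalues j) hij
  simp only [Function.comp] at h
  simpa [σA, μA, neg_le_neg_iff] using h

lemma sValSq_fin (A : Matrix (Fin m) (Fin n) ℝ) (i : Fin n) :
    sValSq A i.val = μA A (σA A i) := by
  simp [sValSq, μA, σA, i.isLt]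

lemma sValSq_nonneg (A : Matrix (Fin m) (Fin n) ℝ) (i : ℕ) : 0 ≤ sValSq A i := by
  rw [sValSq]
  split
  · exact μA_nonneg A _
  · exact le_refl 0

lemma sValSq_zero (A : Matrix (Fin m) (Fin n) ℝ) (i : ℕ) (h : n ≤ i) : sValSq A i = 0 := by
  rw [sValSq, dif_neg (not_lt.mpr h)]

lemma sValSq_anti (A : Matrix (Fin m) (Fin n) ℝ) :
    ∀ i j : ℕ, i ≤ j → sValSq A j ≤ sValSq A i := by
  intro i j hij
  by_cases hj : j < n
  · have hi : i < n := lt_of_le_of_lt hij hj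
    have := μA_sort_anti A ⟨i, hi⟩ ⟨j, hj⟩ hij
    rw [← sValSq_fin A ⟨i, hi⟩, ← sValSq_fin A ⟨j, hj⟩] at this
    exact this
  · rw [sValSq_zero A j (not_lt.mp hj)]
    exact sValSq_nonneg A i

lemma sVal_sq (A : Matrix (Fin m) (Fin n) ℝ) (i : ℕ) : sVal A i ^ 2 = sValSq A i :=
  Real.sq_sqrt (sValSq_nonneg A i)

lemma euc_inner {p : ℕ} (x y : EuclideanSpace ℝ (Fin p)) :
    (inner ℝ x y : ℝ) = (⇑x : Fin p → ℝ) ⬝ᵥ (⇑y : Fin p → ℝ) := by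
  simp [PiLp.inner_apply, dotProduct, RCLike.inner_apply, mul_comm]

lemma parseval {p : ℕ} (b : OrthonormalBasis (Fin p) ℝ (EuclideanSpace ℝ (Fin p)))
    (x : Fin p → ℝ) : ∑ j, (x ⬝ᵥ (⇑(b j) : Fin p → ℝ))^2 = x ⬝ᵥ x := by
  have key := b.sum_inner_mul_inner ((WithLp.equiv 2 (Fin p → ℝ)).symm x)
    ((WithLp.equiv 2 (Fin p → ℝ)).symm x)
  simp only [euc_inner] at key
  have key2 : ∑ j, (x ⬝ᵥ (⇑(b j) : Fin p → ℝ)) * ((⇑(b j) : Fin p → ℝ) ⬝ᵥ x) = x ⬝ᵥ x := key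
  calc ∑ j, (x ⬝ᵥ ⇑(b j))^2
      = ∑ j, (x ⬝ᵥ (⇑(b j) : Fin p → ℝ)) * ((⇑(b j) : Fin p → ℝ) ⬝ᵥ x) := by
        refine Finset.sum_congr rfl fun j _ => ?_
        rw [dotProduct_comm _ x, sq]
    _ = x ⬝ᵥ x := key2

lemma mulVec_dot {a b : ℕ} (B : Matrix (Fin a) (Fin b) ℝ) (x y : Fin b → ℝ) :
    (B *ᵥ x) ⬝ᵥ (B *ᵥ y) = x ⬝ᵥ ((Bᴴ * B) *ᵥ y) := by
  rw [← Matrix.mulVec_mulVec, Matrix.conjTranspose_eq_transpose_of_trivial,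
    Matrix.dotProduct_mulVec x, Matrix.vecMul_transpose]

lemma ATA_mulVec (A : Matrix (Fin m) (Fin n) ℝ) (j : Fin n) :
    (Aᴴ * A) *ᵥ Vf A j = μA A j • Vf A j :=
  (Matrix.isHermitian_transpose_mul_self A).mulVec_eigenvectorBasis j

lemma uA_dot (A : Matrix (Fin m) (Fin n) ℝ) (i j : Fin n) :
    uA A i ⬝ᵥ uA A j = if i = j then μA A j else 0 := by
  rw [uA, uA, mulVec_dot, ATA_mulVec]
  have horth := (VA A).orthonormal
  rw [orthonormal_iff_ite] at horth
  have h2 := horth i j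
  rw [euc_inner] at h2
  have h3 : (Vf A i) ⬝ᵥ (Vf A j) = if i = j then (1:ℝ) else 0 := h2
  rw [dotProduct_smul, h3]
  by_cases h : i = j <;> simp [h]

lemma dot_self_nonneg {p : ℕ} (x : Fin p → ℝ) : 0 ≤ x ⬝ᵥ x :=
  Finset.sum_nonneg fun i _ => mul_self_nonneg _

lemma row_contract {k : ℕ} (S : Matrix (Fin k) (Fin m) ℝ) (hS : S * Sᵀ = 1)
    (y : Fin m → ℝ) : (S *ᵥ y) ⬝ᵥ (S *ᵥ y) ≤ y ⬝ᵥ y := by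
  set w := S *ᵥ y with hw
  have key : ∀ a c : Fin k → ℝ, (Sᵀ *ᵥ a) ⬝ᵥ (Sᵀ *ᵥ c) = a ⬝ᵥ c := by
    intro a c
    rw [mulVec_dot, Matrix.conjTranspose_eq_transpose_of_trivial, Matrix.transpose_transpose,
      hS, Matrix.one_mulVec]
  have key2 : y ⬝ᵥ (Sᵀ *ᵥ w) = w ⬝ᵥ w := by
    rw [Matrix.dotProduct_mulVec, Matrix.vecMul_transpose]
  have key3 : (Sᵀ *ᵥ w) ⬝ᵥ y = w ⬝ᵥ w := by
    rw [dotProduct_comm, key2]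
  have hz := dot_self_nonneg (y - Sᵀ *ᵥ w)
  rw [sub_dotProduct, dotProduct_sub, dotProduct_sub, key, key2, key3] at hz
  linarith

lemma frobSq_eq_sum_q {k : ℕ} (A : Matrix (Fin m) (Fin n) ℝ) (S : Matrix (Fin k) (Fin m) ℝ) :
    frobSq (S * A) = ∑ j : Fin n, (S *ᵥ uA A j) ⬝ᵥ (S *ᵥ uA A j) := by
  have h1 : ∀ j, (S *ᵥ uA A j) ⬝ᵥ (S *ᵥ uA A j) = ∑ i : Fin k, ((S * A) i ⬝ᵥ Vf A j)^2 := by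
    intro j
    rw [uA, Matrix.mulVec_mulVec]
    simp [dotProduct, Matrix.mulVec, sq]
  rw [Finset.sum_congr rfl (fun j _ => h1 j), Finset.sum_comm, frobSq]
  refine Finset.sum_congr rfl fun i _ => ?_
  have hp : ∑ j : Fin n, ((S * A) i ⬝ᵥ Vf A j)^2 = (S * A) i ⬝ᵥ (S * A) i := parseval (VA A) _
  rw [hp]
  simp [dotProduct, sq]

lemma q_le_mu {k : ℕ} (A : Matrix (Fin m) (Fin n) ℝ) (S : Matrix (Fin k) (Fin m) ℝ)
    (hS : S * Sᵀ = 1) (j : Fin n) :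
    (S *ᵥ uA A j) ⬝ᵥ (S *ᵥ uA A j) ≤ μA A j := by
  have h := row_contract S hS (uA A j)
  rwa [uA_dot, if_pos rfl] at h

lemma bessel_bound {k : ℕ} (A : Matrix (Fin m) (Fin n) ℝ) (S : Matrix (Fin k) (Fin m) ℝ)
    (hS : S * Sᵀ = 1) :
    ∑ j : Fin n, (if μA A j ≠ 0 then
        (μA A j)⁻¹ * ((S *ᵥ uA A j) ⬝ᵥ (S *ᵥ uA A j)) else 0) ≤ (k : ℝ) := by
  classical
  set w : {j : Fin n // μA A j ≠ 0} → EuclideanSpace ℝ (Fin m) :=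
    fun j => (WithLp.equiv 2 (Fin m → ℝ)).symm ((Real.sqrt (μA A j.1))⁻¹ • uA A j.1) with hw
  have hworth : Orthonormal ℝ w := by
    rw [orthonormal_iff_ite]
    intro a c
    rw [euc_inner]
    show ((Real.sqrt (μA A a.1))⁻¹ • uA A a.1) ⬝ᵥ ((Real.sqrt (μA A c.1))⁻¹ • uA A c.1) = _
    rw [smul_dotProduct, dotProduct_smul, uA_dot]
    by_cases h : a = c
    · subst h
      rw [if_pos rfl, if_pos rfl]
      have hpos : 0 < μA A a.1 := lt_of_le_of_ne (μA_nonneg A a.1) (Ne.symm a.2)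
      have hs : Real.sqrt (μA A a.1) * Real.sqrt (μA A a.1) = μA A a.1 :=
        Real.mul_self_sqrt (le_of_lt hpos)
      have hsne : Real.sqrt (μA A a.1) ≠ 0 := by
        intro hc; rw [hc, mul_zero] at hs; exact a.2 hs.symm
      simp only [smul_eq_mul]
      field_simp
      rw [sq, hs]
    · have h1 : a.1 ≠ c.1 := fun hc => h (Subtype.ext hc)
      rw [if_neg h1, if_neg h]
      simp
  -- Bessel for each row of S
  have hbes : ∀ i : Fin k,
      ∑ j : {j : Fin n // μA A j ≠ 0}, ‖(inner ℝ (w j)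
        ((WithLp.equiv 2 (Fin m → ℝ)).symm (S i)) : ℝ)‖^2 ≤ 1 := by
    intro i
    have h := hworth.sum_inner_products_le ((WithLp.equiv 2 (Fin m → ℝ)).symm (S i))
      (s := Finset.univ)
    have hnorm : ‖(WithLp.equiv 2 (Fin m → ℝ)).symm (S i)‖^2 = 1 := by
      rw [← real_inner_self_eq_norm_sq, euc_inner]
      show S i ⬝ᵥ S i = 1
      have := congrFun (congrFun hS i) i
      rw [Matrix.mul_apply] at this
      rw [dotProduct]
      simpa [Matrix.transpose_apply, Matrix.one_apply] using this
    rw [hnorm] at h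
    exact h
  have htot : ∑ i : Fin k, ∑ j : {j : Fin n // μA A j ≠ 0}, ‖(inner ℝ (w j)
      ((WithLp.equiv 2 (Fin m → ℝ)).symm (S i)) : ℝ)‖^2 ≤ (k : ℝ) := by
    calc _ ≤ ∑ _i : Fin k, (1:ℝ) := Finset.sum_le_sum fun i _ => hbes i
      _ = (k : ℝ) := by simp
  rw [Finset.sum_comm] at htot
  -- rewrite LHS of the goal as a subtype sum
  have hsub : ∑ j : Fin n, (if μA A j ≠ 0 then
      (μA A j)⁻¹ * ((S *ᵥ uA A j) ⬝ᵥ (S *ᵥ uA A j)) else 0)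
      = ∑ j : {j : Fin n // μA A j ≠ 0},
        (μA A j.1)⁻¹ * ((S *ᵥ uA A j.1) ⬝ᵥ (S *ᵥ uA A j.1)) := by
    rw [← Finset.sum_filter]
    have h2 : ∑ j ∈ Finset.univ.filter (fun j => μA A j ≠ 0),
        (μA A j)⁻¹ * ((S *ᵥ uA A j) ⬝ᵥ (S *ᵥ uA A j))
        = ∑ j : {j : Fin n // μA A j ≠ 0},
          (μA A j.1)⁻¹ * ((S *ᵥ uA A j.1) ⬝ᵥ (S *ᵥ uA A j.1)) :=
      Finset.sum_subtype _ (fun x => by simp) _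
    exact h2
  rw [hsub]
  refine le_trans (le_of_eq (Finset.sum_congr rfl fun j _ => ?_)) htot
  -- per j : μ⁻¹ * q j = ∑ i ‖⟪w j, s i⟫‖²
  have hpos : 0 < μA A j.1 := lt_of_le_of_ne (μA_nonneg A j.1) (Ne.symm j.2)
  have hip : ∀ i : Fin k, (inner ℝ (w j) ((WithLp.equiv 2 (Fin m → ℝ)).symm (S i)) : ℝ)
      = (Real.sqrt (μA A j.1))⁻¹ * (uA A j.1 ⬝ᵥ S i) := by
    intro i
    rw [euc_inner]
    show ((Real.sqrt (μA A j.1))⁻¹ • uA A j.1) ⬝ᵥ S i = _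
    rw [smul_dotProduct]
    simp [smul_eq_mul]
  have hq : (S *ᵥ uA A j.1) ⬝ᵥ (S *ᵥ uA A j.1) = ∑ i : Fin k, (uA A j.1 ⬝ᵥ S i)^2 := by
    simp only [dotProduct, Matrix.mulVec, sq]
    refine Finset.sum_congr rfl fun i _ => ?_
    have hcm : ∑ x, S i x * uA A j.1 x = ∑ x, uA A j.1 x * S i x :=
      Finset.sum_congr rfl fun x _ => mul_comm _ _
    rw [hcm]
  rw [hq, Finset.mul_sum]
  refine Finset.sum_congr rfl fun i _ => ?_
  rw [hip i, Real.norm_eq_abs, sq_abs, mul_pow, sq, sq]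
  rw [← Real.sqrt_inv]
  rw [Real.mul_self_sqrt (inv_nonneg.mpr (le_of_lt hpos))]

lemma upper_bound {k : ℕ} (A : Matrix (Fin m) (Fin n) ℝ) (S : Matrix (Fin k) (Fin m) ℝ)
    (hS : S * Sᵀ = 1) :
    frobSq (S * A) ≤ ∑ i ∈ range k, sValSq A i := by
  classical
  set q : Fin n → ℝ := fun j => (S *ᵥ uA A j) ⬝ᵥ (S *ᵥ uA A j) with hq
  set C : ℕ → ℝ := fun i => if h : i < n then
      (if μA A (σA A ⟨i, h⟩) ≠ 0 then (μA A (σA A ⟨i, h⟩))⁻¹ * q (σA A ⟨i, h⟩) else 0)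
    else 0 with hC
  have hC' : ∀ i : Fin n, C i.val
      = (if μA A (σA A i) ≠ 0 then (μA A (σA A i))⁻¹ * q (σA A i) else 0) := by
    intro i
    simp only [hC, i.isLt, dif_pos, Fin.eta]
  have hD' : ∀ i : Fin n, sValSq A i.val = μA A (σA A i) := fun i => sValSq_fin A i
  have hfrob : frobSq (S * A) = ∑ i ∈ range n, sValSq A i * C i := by
    rw [frobSq_eq_sum_q A S, ← Fin.sum_univ_eq_sum_range (fun i => sValSq A i * C i)]
    rw [← Equiv.sum_comp (σA A) q]
    refine Finset.sum_congr rfl fun i _ => ?_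
    rw [hC' i, hD' i]
    by_cases h : μA A (σA A i) ≠ 0
    · rw [if_pos h]
      field_simp
    · rw [if_neg h]
      push_neg at h
      have h1 : q (σA A i) ≤ 0 := by
        have := q_le_mu A S hS (σA A i); rw [h] at this; exact this
      have h2 : 0 ≤ q (σA A i) := dot_self_nonneg _
      rw [mul_zero]
      linarith
  rw [hfrob]
  refine abstract_ineq n k (sValSq A) C (sValSq_anti A) (sValSq_nonneg A)
    (sValSq_zero A) ?_ ?_ ?_
  · intro i
    simp only [hC]
    split
    · split
      · refine mul_nonneg (inv_nonneg.mpr (μA_nonneg A _)) (dot_self_nonneg _)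
      · exact le_refl 0
    · exact le_refl 0
  · intro i
    simp only [hC]
    split
    · split
      · rename_i h hne
        have hpos : 0 < μA A (σA A ⟨i, h⟩) :=
          lt_of_le_of_ne (μA_nonneg A _) (Ne.symm hne)
        rw [inv_mul_le_iff₀ hpos, mul_one]
        exact q_le_mu A S hS _
      · exact zero_le_one
    · exact zero_le_one
  · rw [← Fin.sum_univ_eq_sum_range C]
    have : ∑ i : Fin n, C i.val = ∑ j : Fin n,
        (if μA A j ≠ 0 then (μA A j)⁻¹ * q j else 0) := by
      rw [Finset.sum_congr rfl (fun i _ => hC' i),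
        ← Equiv.sum_comp (σA A) (fun j => if μA A j ≠ 0 then (μA A j)⁻¹ * q j else 0)]
    rw [this]
    exact bessel_bound A S hS

end Aux

noncomputable def wA (A : Matrix (Fin m) (Fin n) ℝ) (j : Fin n) : EuclideanSpace ℝ (Fin m) :=
  (WithLp.equiv 2 (Fin m → ℝ)).symm ((Real.sqrt (μA A j))⁻¹ • uA A j)

lemma wA_orthonormal (A : Matrix (Fin m) (Fin n) ℝ) :
    Orthonormal ℝ (fun j : {j : Fin n // μA A j ≠ 0} => wA A j.1) := by
  rw [orthonormal_iff_ite]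
  intro a c
  rw [euc_inner]
  show ((Real.sqrt (μA A a.1))⁻¹ • uA A a.1) ⬝ᵥ ((Real.sqrt (μA A c.1))⁻¹ • uA A c.1) = _
  rw [smul_dotProduct, dotProduct_smul, uA_dot]
  by_cases h : a = c
  · subst h
    rw [if_pos rfl, if_pos rfl]
    have hpos : 0 < μA A a.1 := lt_of_le_of_ne (μA_nonneg A a.1) (Ne.symm a.2)
    have hs : Real.sqrt (μA A a.1) * Real.sqrt (μA A a.1) = μA A a.1 :=
      Real.mul_self_sqrt (le_of_lt hpos)
    have hsne : Real.sqrt (μA A a.1) ≠ 0 := by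
      intro hc; rw [hc, mul_zero] at hs; exact a.2 hs.symm
    simp only [smul_eq_mul]
    field_simp
    rw [sq, hs]
  · have h1 : a.1 ≠ c.1 := fun hc => h (Subtype.ext hc)
    rw [if_neg h1, if_neg h]
    simp

lemma card_nonzero_le (A : Matrix (Fin m) (Fin n) ℝ) :
    Fintype.card {j : Fin n // μA A j ≠ 0} ≤ m := by
  have h := (wA_orthonormal A).linearIndependent.fintype_card_le_finrank
  rwa [finrank_euclideanSpace, Fintype.card_fin] at h

lemma uA_zero (A : Matrix (Fin m) (Fin n) ℝ) {j : Fin n} (h : μA A j = 0) : uA A j = 0 := by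
  have hd := uA_dot A j j
  rw [if_pos rfl, h] at hd
  exact dotProduct_self_eq_zero.mp hd

lemma achieve {k : ℕ} (A : Matrix (Fin m) (Fin n) ℝ) (hkm : k ≤ m) :
    ∃ S : Matrix (Fin k) (Fin m) ℝ, S * Sᵀ = 1 ∧
      frobSq (S * A) = ∑ i ∈ range k, sValSq A i := by
  classical
  set s : Set (Fin m) := {i | ∃ h : (i : ℕ) < n, μA A (σA A ⟨(i : ℕ), h⟩) ≠ 0} with hsdef
  set v : Fin m → EuclideanSpace ℝ (Fin m) :=
    fun i => if h : (i : ℕ) < n then wA A (σA A ⟨(i : ℕ), h⟩) else 0 with hvdef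
  have horth : Orthonormal ℝ (s.restrict v) := by
    rw [orthonormal_iff_ite]
    intro a c
    obtain ⟨ha, hμa⟩ := a.2
    obtain ⟨hc, hμc⟩ := c.2
    have hva : s.restrict v a = wA A (σA A ⟨(a.1 : ℕ), ha⟩) := by
      show v a.1 = _
      simp only [Set.restrict_apply, hvdef, dif_pos ha]
    have hvc : s.restrict v c = wA A (σA A ⟨(c.1 : ℕ), hc⟩) := by
      show v c.1 = _
      simp only [Set.restrict_apply, hvdef, dif_pos hc]
    rw [hva, hvc]
    have hgen := wA_orthonormal A
    rw [orthonormal_iff_ite] at hgen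
    have := hgen ⟨σA A ⟨(a.1 : ℕ), ha⟩, hμa⟩ ⟨σA A ⟨(c.1 : ℕ), hc⟩, hμc⟩
    rw [this]
    have hiff : (⟨σA A ⟨(a.1 : ℕ), ha⟩, hμa⟩ : {j : Fin n // μA A j ≠ 0})
        = ⟨σA A ⟨(c.1 : ℕ), hc⟩, hμc⟩ ↔ a = c := by
      constructor
      · intro h
        have h2 := Subtype.mk_eq_mk.mp h
        have h3 := (σA A).injective h2
        have h4 : (a.1 : ℕ) = (c.1 : ℕ) := Fin.mk_eq_mk.mp h3
        exact Subtype.ext (Fin.ext h4)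
      · intro h; subst h; rfl
    by_cases h : a = c
    · rw [if_pos (hiff.mpr h), if_pos h]
    · rw [if_neg (fun hc' => h (hiff.mp hc')), if_neg h]
  obtain ⟨b, hb⟩ := horth.exists_orthonormalBasis_extension_of_card_eq
    (by rw [finrank_euclideanSpace, Fintype.card_fin])
  set S : Matrix (Fin k) (Fin m) ℝ :=
    Matrix.of (fun i j => (⇑(b (Fin.castLE hkm i)) : Fin m → ℝ) j) with hSdef
  have hborth := b.orthonormal
  rw [orthonormal_iff_ite] at hborth
  have hS : S * Sᵀ = 1 := by
    ext i i'
    rw [Matrix.mul_apply, Matrix.one_apply]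
    have h1 : ∑ t, S i t * Sᵀ t i'
        = (⇑(b (Fin.castLE hkm i)) : Fin m → ℝ) ⬝ᵥ (⇑(b (Fin.castLE hkm i')) : Fin m → ℝ) := rfl
    rw [h1, ← euc_inner, hborth]
    by_cases h : i = i'
    · rw [if_pos (by rw [h]), if_pos h]
    · rw [if_neg (fun hc => h (Fin.castLE_injective hkm hc)), if_neg h]
  refine ⟨S, hS, ?_⟩
  -- row i of S*A is Aᵀ *ᵥ (b (castLE i))
  have hrow : ∀ i : Fin k, ∑ j, ((S * A) i j)^2
      = (Aᵀ *ᵥ ⇑(b (Fin.castLE hkm i))) ⬝ᵥ (Aᵀ *ᵥ ⇑(b (Fin.castLE hkm i))) := by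
    intro i
    simp only [dotProduct, Matrix.mul_apply, Matrix.mulVec, Matrix.transpose_apply, sq,
      hSdef, Matrix.of_apply]
    refine Finset.sum_congr rfl fun j _ => ?_
    congr 1 <;> exact Finset.sum_congr rfl fun t _ => mul_comm _ _
  have hmain : ∀ i : Fin k,
      (Aᵀ *ᵥ ⇑(b (Fin.castLE hkm i))) ⬝ᵥ (Aᵀ *ᵥ ⇑(b (Fin.castLE hkm i))) = sValSq A (i : ℕ) := by
    intro i
    set i' : Fin m := Fin.castLE hkm i with hi'
    by_cases hP : i' ∈ s
    · -- top singular vector row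
      obtain ⟨hn', hne⟩ := hP
      set j := σA A ⟨(i' : ℕ), hn'⟩ with hj
      have hbv : b i' = wA A j := by
        rw [hb i' ⟨hn', hne⟩]
        simp only [hvdef, dif_pos hn']
        rfl
      have hcoe : (⇑(b i') : Fin m → ℝ) = (Real.sqrt (μA A j))⁻¹ • uA A j := by
        rw [hbv]; rfl
      rw [hcoe]
      have hpos : 0 < μA A j := lt_of_le_of_ne (μA_nonneg A j) (Ne.symm hne)
      -- (Aᵀ *ᵥ (c • u)) ⬝ᵥ (Aᵀ *ᵥ (c • u)) = c^2 * (u ⬝ᵥ ((A*Aᵀ) *ᵥ u))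
      rw [Matrix.mulVec_smul, smul_dotProduct, dotProduct_smul]
      have hAu : (Aᵀ *ᵥ uA A j) ⬝ᵥ (Aᵀ *ᵥ uA A j) = uA A j ⬝ᵥ ((A * Aᵀ) *ᵥ uA A j) := by
        rw [mulVec_dot, Matrix.conjTranspose_eq_transpose_of_trivial, Matrix.transpose_transpose]
      have hAAu : (A * Aᵀ) *ᵥ uA A j = μA A j • uA A j := by
        rw [uA, Matrix.mulVec_mulVec]
        have h5 : A * Aᵀ * A = A * (Aᵀ * A) := by rw [Matrix.mul_assoc]
        rw [h5]
        have h6 : (Aᵀ * A) *ᵥ Vf A j = μA A j • Vf A j := by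
          have := ATA_mulVec A j
          rwa [Matrix.conjTranspose_eq_transpose_of_trivial] at this
        rw [← Matrix.mulVec_mulVec, h6, Matrix.mulVec_smul]
      rw [hAu, hAAu, dotProduct_smul]
      have hud : uA A j ⬝ᵥ uA A j = μA A j := by rw [uA_dot, if_pos rfl]
      rw [hud]
      have hsv : sValSq A (i : ℕ) = μA A j := by
        have hcast : ((i' : ℕ)) = (i : ℕ) := rfl
        rw [← hcast]
        simp [sValSq, μA, σA, hn', hj]
      rw [hsv]
      have hs2 : Real.sqrt (μA A j) * Real.sqrt (μA A j) = μA A j :=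
        Real.mul_self_sqrt (le_of_lt hpos)
      simp only [smul_eq_mul]
      field_simp
      rw [sq, hs2]
    · -- zero row
      have hz : Aᵀ *ᵥ (⇑(b i') : Fin m → ℝ) = 0 := by
        have hall : ∀ j : Fin n, uA A j ⬝ᵥ (⇑(b i') : Fin m → ℝ) = 0 := by
          intro j
          by_cases hμ : μA A j = 0
          · rw [uA_zero A hμ, zero_dotProduct]
          · set i₀ : Fin n := (σA A).symm j with hi₀
            have hj0 : σA A i₀ = j := (σA A).apply_symm_apply j
            have hμ0 : μA A (σA A i₀) ≠ 0 := by rw [hj0]; exact hμ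
            -- i₀.val < m via cardinality
            have hcard : (i₀ : ℕ) < m := by
              have hinj : Function.Injective (fun t : Fin ((i₀ : ℕ) + 1) =>
                  (⟨σA A ⟨(t : ℕ), lt_of_le_of_lt (Nat.le_of_lt_succ t.isLt) i₀.isLt⟩,
                    by
                      refine fun hc => ?_
                      have hle : (⟨(t : ℕ), lt_of_le_of_lt (Nat.le_of_lt_succ t.isLt) i₀.isLt⟩ : Fin n) ≤ i₀ :=
                        Nat.le_of_lt_succ t.isLt
                      have := μA_sort_anti A _ _ hle
                      have hpos0 : 0 < μA A (σA A i₀) :=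
                        lt_of_le_of_ne (μA_nonneg A _) (Ne.symm hμ0)
                      rw [hc] at this
                      linarith⟩ : {j : Fin n // μA A j ≠ 0})) := by
                intro t t' htt
                have h2 := Subtype.mk_eq_mk.mp htt
                have h3 := (σA A).injective h2
                exact Fin.ext (Fin.mk_eq_mk.mp h3)
              have := Fintype.card_le_of_injective _ hinj
              rw [Fintype.card_fin] at this
              have h4 := card_nonzero_le A
              omega
            set p : Fin m := ⟨(i₀ : ℕ), hcard⟩ with hp
            have hpmem : p ∈ s := by
              refine ⟨i₀.isLt, ?_⟩
              have : (⟨(p : ℕ), i₀.isLt⟩ : Fin n) = i₀ := Fin.ext rfl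
              rw [this]; exact hμ0
            have hbp : b p = wA A j := by
              rw [hb p hpmem]
              simp only [hvdef]
              rw [dif_pos (show ((p : Fin m) : ℕ) < n from i₀.isLt)]
              have h10 : wA A ((σA A) (⟨(i₀ : ℕ), i₀.isLt⟩ : Fin n)) = wA A j := by
                rw [Fin.eta, hj0]
              exact h10
            have hne' : p ≠ i' := fun hc => hP (hc ▸ hpmem)
            have hzero := hborth p i'
            rw [if_neg hne', euc_inner] at hzero
            have hzero2 : ((Real.sqrt (μA A j))⁻¹ • uA A j) ⬝ᵥ (⇑(b i') : Fin m → ℝ) = 0 := by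
              rw [← hzero, hbp]; rfl
            rw [smul_dotProduct, smul_eq_mul] at hzero2
            have hpos : 0 < μA A j := lt_of_le_of_ne (μA_nonneg A j) (Ne.symm hμ)
            have hsne : (Real.sqrt (μA A j))⁻¹ ≠ 0 :=
              inv_ne_zero (Real.sqrt_ne_zero'.mpr hpos)
            exact (mul_eq_zero.mp hzero2).resolve_left hsne
        -- conclude the vector is zero using the basis VA
        set X : EuclideanSpace ℝ (Fin n) :=
          (WithLp.equiv 2 (Fin n → ℝ)).symm (Aᵀ *ᵥ (⇑(b i') : Fin m → ℝ)) with hX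
        have hXrepr : (VA A).repr X = 0 := by
          ext j
          rw [OrthonormalBasis.repr_apply_apply, euc_inner]
          have h7 : Vf A j ⬝ᵥ (Aᵀ *ᵥ (⇑(b i') : Fin m → ℝ)) = 0 := by
            rw [Matrix.dotProduct_mulVec, Matrix.vecMul_transpose]
            exact hall j
          have h8 : (⇑(VA A j) : Fin n → ℝ) ⬝ᵥ (⇑X : Fin n → ℝ)
              = Vf A j ⬝ᵥ (Aᵀ *ᵥ (⇑(b i') : Fin m → ℝ)) := rfl
          rw [h8, h7]
          rfl
        have hX0 : X = 0 := by
          have := congrArg (VA A).repr.symm hXrepr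
          rwa [LinearIsometryEquiv.symm_apply_apply, map_zero] at this
        have : (⇑X : Fin n → ℝ) = 0 := by rw [hX0]; rfl
        exact this
      rw [hz, dotProduct_zero]
      -- sValSq is zero here
      have : ∀ h : (i : ℕ) < n, μA A (σA A ⟨(i : ℕ), h⟩) = 0 := by
        intro h
        by_contra hc
        exact hP ⟨h, hc⟩
      rw [sValSq]
      split
      · rename_i h
        exact ((this h).symm : _)
      · rfl
  -- put it together
  rw [frobSq]
  rw [Finset.sum_congr rfl (fun i _ => hrow i), Finset.sum_congr rfl (fun i _ => hmain i)]
  exact Fin.sum_univ_eq_sum_range (fun i => sValSq A i) k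

theorem stmt_12 {m n k : ℕ} (A : Matrix (Fin m) (Fin n) ℝ) (hkm : k ≤ m) :
    IsGreatest {x : ℝ | ∃ S : Matrix (Fin k) (Fin m) ℝ,
        S * Sᵀ = 1 ∧ x = frobSq (S * A)}
      (∑ i ∈ Finset.range k, (sVal A i) ^ 2) := by
  constructor
  · obtain ⟨S, hS, hach⟩ := achieve A hkm
    refine ⟨S, hS, ?_⟩
    rw [hach]
    exact Finset.sum_congr rfl fun i _ => sVal_sq A i
  · rintro x ⟨S, hS, rfl⟩
    calc frobSq (S * A) ≤ ∑ i ∈ range k, sValSq A i := upper_bound A S hS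
      _ = ∑ i ∈ range k, sVal A i ^ 2 :=
        Finset.sum_congr rfl fun i _ => (sVal_sq A i).symm
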